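/- Let R be a commutative Noetherian ring of prime characteristic p, let I be an ideal of R, let U be a multiplicative set in R, and let z ∈ R. Suppose that for every minimal prime P of R disjoint from U, the image of z/1 in (R/P)[U⁻¹] lies in the tight closure of the extended ideal I·(R/P)[U⁻¹]. Then z/1 lies in the tight closure of I·R[U⁻¹] in R[U⁻¹] — equivalently, if tight closure commutes with localization in each R/P, there exists u ∈ U with u·z ∈ (I·(R/P))* for every minimal prime P of R disjoint from U. -/

import Mathlib

/-- The `q`-th Frobenius power `I^{[q]}` of an ideal `I`: the ideal generated by
`q`-th powers of elements of `I`. -/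
def Ideal.frobeniusPower {R : Type*} [CommRing R] (I : Ideal R) (q : ℕ) : Ideal R :=
  Ideal.span ((fun x => x ^ q) '' (I : Set R))

/-- `R°`: the set of elements of `R` not contained in any minimal prime of `R`. -/
def primeComplement (R : Type*) [CommRing R] : Set R :=
  { c | ∀ P ∈ minimalPrimes R, c ∉ P }

/-- The tight closure `I*` of an ideal `I` in a ring of characteristic `p`:
elements `z` such that `c * z ^ (p ^ e) ∈ I ^ [p ^ e]` for some `c ∈ R°`
and all sufficiently large `e`. -/
def tightClosure (p : ℕ) {R : Type*} [CommRing R] (I : Ideal R) : Set R :=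
  { z | ∃ c ∈ primeComplement R, ∃ N : ℕ, ∀ e : ℕ, N ≤ e →
      c * z ^ p ^ e ∈ I.frobeniusPower (p ^ e) }

/-- Tight closure commutes with localization in `R`: for every ideal `I` and
multiplicative set `U`, `I* · R[U⁻¹] = (I · R[U⁻¹])*`. -/
def TightClosureCommutesWithLocalization (p : ℕ) (R : Type*) [CommRing R] : Prop :=
  ∀ (I : Ideal R) (U : Submonoid R),
    (Ideal.map (algebraMap R (Localization U)) (Ideal.span (tightClosure p I)) :
        Set (Localization U))
      = tightClosure p (Ideal.map (algebraMap R (Localization U)) I)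

/-- A ring is F-regular if every ideal is tightly closed, both in the ring itself
and in all of its localizations. -/
def FRegular (p : ℕ) (S : Type*) [CommRing S] : Prop :=
  (∀ I : Ideal S, tightClosure p I = (I : Set S)) ∧
    ∀ (U : Submonoid S) (J : Ideal (Localization U)),
      tightClosure p J = (J : Set (Localization U))

/-!
The minimal primes of `S = R[U⁻¹]` are the `P·S` with `P` a minimal prime of `R` disjoint
from `U`, and `S ⧸ P·S ≅ (R/P)[U⁻¹]`. So the hypothesis gives, for every minimal prime `Q` of
`S`, some `c ∉ Q` with `c·z^q ∈ (I·S)^{[q]} + Q` for all large `q`. Multiplying `c` by an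
element lying in all other minimal primes but not in `Q` moves the error term into the
nilradical; prime avoidance then produces one such multiplier in `S°`, and raising everything
to the `p^k`-th power, where `(nil S)^k = 0`, kills the nilpotent error term.

When tight closure commutes with localization in `R/P`, the hypothesis at `P` says that
`u_P·z` lies in `(I·R/P)*` for some `u_P ∈ U`; the product of the finitely many `u_P` works
for every `P`.
-/
theorem Submonoid.exists_mem_forall_of_forall_exists_mem {M ι : Type*} [CommMonoid M]
    (U : Submonoid M) {s : Set ι} (hs : s.Finite) {A : ι → M → Prop}
    (hA : ∀ i ∈ s, ∀ u v, A i u → A i (v * u)) (h : ∀ i ∈ s, ∃ u ∈ U, A i u) :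
    ∃ u ∈ U, ∀ i ∈ s, A i u := by
  classical
  choose! u huU hu using h
  refine ⟨∏ i ∈ hs.toFinset, u i, U.prod_mem fun i hi => huU i (hs.mem_toFinset.1 hi),
    fun i hi => ?_⟩
  rw [← Finset.prod_erase_mul _ _ (hs.mem_toFinset.2 hi)]
  exact hA i hi _ _ (hu i hi)

section Frobenius

variable {p : ℕ} [Fact p.Prime] {R S : Type*} [CommRing R] [CommRing S]

theorem pow_mem_span_image_pow [CharP R p] {s : Set R} {x : R} (hx : x ∈ Ideal.span s) (e : ℕ) :
    x ^ p ^ e ∈ Ideal.span ((· ^ p ^ e) '' s) := by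
  induction hx using Submodule.span_induction with
  | mem x hx => exact Ideal.subset_span ⟨x, hx, rfl⟩
  | zero => rw [zero_pow (pow_pos (Fact.out : p.Prime).pos e).ne']; exact zero_mem _
  | add x y _ _ hx hy => rw [add_pow_char_pow]; exact add_mem hx hy
  | smul r x _ hx => rw [smul_eq_mul, mul_pow]; exact Ideal.mul_mem_left _ _ hx

theorem Ideal.pow_mem_frobeniusPower_pow_add [CharP R p] {I : Ideal R} {a : R} {e : ℕ}
    (ha : a ∈ I.frobeniusPower (p ^ e)) (k : ℕ) :
    a ^ p ^ k ∈ I.frobeniusPower (p ^ (e + k)) := by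
  simpa only [Ideal.frobeniusPower, Set.image_image, ← pow_mul, ← pow_add]
    using pow_mem_span_image_pow ha k

theorem Ideal.frobeniusPower_map_le [CharP S p] (f : R →+* S) (I : Ideal R) (e : ℕ) :
    (I.map f).frobeniusPower (p ^ e) ≤ (I.frobeniusPower (p ^ e)).map f := by
  refine Ideal.span_le.2 ?_
  rintro _ ⟨y, hy, rfl⟩
  simpa only [Ideal.frobeniusPower, Ideal.map_span, Set.image_image, map_pow, SetLike.mem_coe]
    using pow_mem_span_image_pow (s := f '' I) hy e

end Frobenius

section TightClosure

variable {p : ℕ} {R : Type*} [CommRing R]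

theorem charP_of_ringHom_of_nontrivial [Fact p.Prime] [CharP R p] {S : Type*} [CommRing S]
    [Nontrivial S] (f : R →+* S) : CharP S p :=
  CharP.of_ringHom_of_ne_zero (f.comp (ZMod.castHom dvd_rfl R)) p (Fact.out : p.Prime).ne_zero

theorem one_mem_primeComplement : (1 : R) ∈ primeComplement R :=
  fun _ hP h => hP.isPrime.ne_top ((Ideal.eq_top_iff_one _).2 h)

theorem mul_mem_primeComplement {a b : R} (ha : a ∈ primeComplement R)
    (hb : b ∈ primeComplement R) : a * b ∈ primeComplement R :=
  fun P hP => hP.isPrime.mul_notMem (ha P hP) (hb P hP)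

theorem pow_mem_primeComplement {a : R} (ha : a ∈ primeComplement R) (n : ℕ) :
    a ^ n ∈ primeComplement R :=
  fun P hP h => ha P hP (hP.isPrime.mem_of_pow_mem n h)

theorem ne_zero_of_mem_primeComplement [Nontrivial R] {c : R} (hc : c ∈ primeComplement R) :
    c ≠ 0 := by
  obtain ⟨Q, hQ⟩ := Ideal.nonempty_minimalPrimes (I := (⊥ : Ideal R)) bot_ne_top
  rintro rfl
  exact hc Q hQ Q.zero_mem

theorem zero_mem_tightClosure [Fact p.Prime] (I : Ideal R) : (0 : R) ∈ tightClosure p I :=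
  ⟨1, one_mem_primeComplement, 0, fun e _ => by
    rw [zero_pow (pow_pos (Fact.out : p.Prime).pos e).ne', mul_zero]; exact zero_mem _⟩

theorem mul_mem_tightClosure {I : Ideal R} {a : R} (r : R) (ha : a ∈ tightClosure p I) :
    r * a ∈ tightClosure p I := by
  obtain ⟨c, hc, N, hN⟩ := ha
  refine ⟨c, hc, N, fun e he => ?_⟩
  rw [mul_pow, mul_left_comm]
  exact Ideal.mul_mem_left _ _ (hN e he)

theorem add_mem_tightClosure [Fact p.Prime] [CharP R p] {I : Ideal R} {a b : R}
    (ha : a ∈ tightClosure p I) (hb : b ∈ tightClosure p I) : a + b ∈ tightClosure p I := by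
  obtain ⟨c, hc, N, hN⟩ := ha
  obtain ⟨d, hd, M, hM⟩ := hb
  refine ⟨c * d, mul_mem_primeComplement hc hd, max N M, fun e he => ?_⟩
  rw [add_pow_char_pow, show c * d * (a ^ p ^ e + b ^ p ^ e)
      = d * (c * a ^ p ^ e) + c * (d * b ^ p ^ e) by ring]
  exact add_mem (Ideal.mul_mem_left _ _ (hN e (le_of_max_le_left he)))
    (Ideal.mul_mem_left _ _ (hM e (le_of_max_le_right he)))

variable (p) in
def tightClosureIdeal [Fact p.Prime] [CharP R p] (I : Ideal R) : Ideal R where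
  carrier := tightClosure p I
  zero_mem' := zero_mem_tightClosure I
  add_mem' := add_mem_tightClosure
  smul_mem' r _ ha := mul_mem_tightClosure r ha

theorem span_tightClosure_le [Fact p.Prime] [CharP R p] (I : Ideal R) :
    Ideal.span (tightClosure p I) ≤ tightClosureIdeal p I :=
  Ideal.span_le.2 fun _ h => h

end TightClosure

section MinimalPrimes

variable {p : ℕ} {R : Type*} [CommRing R]

variable (p) in
/-- For a minimal prime `Q`, `¬ frobeniusColon p I Q z ≤ Q` says that the image of `z` in
`R ⧸ Q` lies in the tight closure of `I·(R ⧸ Q)`. -/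
def frobeniusColon (I K : Ideal R) (z : R) : Ideal R where
  carrier := {c | ∀ᶠ e in Filter.atTop, c * z ^ p ^ e ∈ I.frobeniusPower (p ^ e) ⊔ K}
  zero_mem' := Filter.Eventually.of_forall fun _ => by simp
  add_mem' ha hb := (ha.and hb).mono fun _ h => by rw [add_mul]; exact add_mem h.1 h.2
  smul_mem' r _ hc := hc.mono fun _ h => by
    rw [smul_eq_mul, mul_assoc]; exact Ideal.mul_mem_left _ r h

theorem mul_mem_frobeniusColon {I K K' : Ideal R} {z c d : R} (hd : ∀ b ∈ K, d * b ∈ K')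
    (hc : c ∈ frobeniusColon p I K z) : d * c ∈ frobeniusColon p I K' z := by
  refine Filter.Eventually.mono hc fun e he => ?_
  obtain ⟨a, ha, b, hb, hab⟩ := Submodule.mem_sup.1 he
  rw [mul_assoc, ← hab, mul_add]
  exact add_mem (Ideal.mem_sup_left (Ideal.mul_mem_left _ d ha)) (Ideal.mem_sup_right (hd b hb))

theorem mem_tightClosure_of_mem_frobeniusColon_nilradical [Fact p.Prime] [IsNoetherianRing R]
    [CharP R p] {I : Ideal R} {z c : R} (hc : c ∈ primeComplement R)
    (hcz : c ∈ frobeniusColon p I (nilradical R) z) : z ∈ tightClosure p I := by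
  obtain ⟨k, hk⟩ := IsNoetherianRing.isNilpotent_nilradical R
  obtain ⟨N, hN⟩ := Filter.eventually_atTop.1 hcz
  refine ⟨c ^ p ^ k, pow_mem_primeComplement hc _, N + k, fun e he => ?_⟩
  obtain ⟨e, rfl⟩ := Nat.exists_eq_add_of_le' ((Nat.le_add_left k N).trans he)
  obtain ⟨a, ha, n, hn, han⟩ := Submodule.mem_sup.1 (hN e (by omega))
  have hn0 : n ^ p ^ k = 0 := by
    refine pow_eq_zero_of_le (Nat.lt_pow_self (Fact.out : p.Prime).one_lt).le ?_
    simpa [hk] using Ideal.pow_mem_pow hn k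
  have hfrob := Ideal.pow_mem_frobeniusPower_pow_add ha k
  rwa [← add_zero (a ^ p ^ k), ← hn0, ← add_pow_char_pow, han, mul_pow, ← pow_mul, ← pow_add]
    at hfrob

theorem exists_notMem_forall_mul_mem_nilradical [IsNoetherianRing R] {Q : Ideal R}
    (hQ : Q ∈ minimalPrimes R) : ∃ d ∉ Q, ∀ b ∈ Q, d * b ∈ nilradical R := by
  classical
  have hfin := minimalPrimes.finite_of_isNoetherianRing R
  set others := hfin.toFinset.erase Q
  obtain ⟨d, hd, hdQ⟩ : ∃ d ∈ others.inf id, d ∉ Q := by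
    refine SetLike.not_le_iff_exists.1 fun hle => ?_
    obtain ⟨Q', hQ', hQ'Q⟩ := (hQ.isPrime.inf_le').1 hle
    obtain ⟨hne, hQ'min⟩ := Finset.mem_erase.1 hQ'
    exact hne (le_antisymm hQ'Q (hQ.2 ((hfin.mem_toFinset.1 hQ'min).1) hQ'Q))
  refine ⟨d, hdQ, fun b hb => ?_⟩
  rw [nilradical, ← Ideal.sInf_minimalPrimes, Submodule.mem_sInf]
  intro Q' hQ'
  by_cases h : Q' = Q
  · exact h ▸ Ideal.mul_mem_left _ d hb
  · exact Ideal.mul_mem_right _ _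
      (Finset.inf_le (f := id) (Finset.mem_erase.2 ⟨h, hfin.mem_toFinset.2 hQ'⟩) hd)

theorem mem_tightClosure_of_forall_minimalPrimes [Fact p.Prime] [IsNoetherianRing R]
    [CharP R p] {I : Ideal R} {z : R} (h : ∀ Q ∈ minimalPrimes R, ¬ frobeniusColon p I Q z ≤ Q) :
    z ∈ tightClosure p I := by
  have hnil : ∀ Q ∈ minimalPrimes R, ¬ frobeniusColon p I (nilradical R) z ≤ Q := by
    intro Q hQ hle
    obtain ⟨c, hc, hcQ⟩ := SetLike.not_le_iff_exists.1 (h Q hQ)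
    obtain ⟨d, hdQ, hd⟩ := exists_notMem_forall_mul_mem_nilradical hQ
    exact hQ.isPrime.mul_notMem hdQ hcQ (hle (mul_mem_frobeniusColon hd hc))
  have avoid := Ideal.subset_union_prime_finite (minimalPrimes.finite_of_isNoetherianRing R)
    (f := id) ⊥ ⊥ (fun Q hQ _ _ => hQ.isPrime) (I := frobeniusColon p I (nilradical R) z)
  obtain ⟨c, hc, hcQ⟩ := Set.not_subset.1 (mt avoid.1 fun ⟨Q, hQ, hle⟩ => hnil Q hQ hle)
  exact mem_tightClosure_of_mem_frobeniusColon_nilradical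
    (fun Q hQ hcQ' => hcQ (Set.mem_biUnion hQ hcQ')) hc

theorem not_frobeniusColon_ker_le_ker [Fact p.Prime] {T : Type*} [CommRing T] [CharP T p]
    {f : R →+* T} (hf : Function.Surjective f) {I : Ideal R} {z : R}
    (hz : f z ∈ tightClosure p (I.map f)) :
    ¬ frobeniusColon p I (RingHom.ker f) z ≤ RingHom.ker f := by
  have : Nontrivial T := CharP.nontrivial_of_char_ne_one (Fact.out : p.Prime).ne_one
  obtain ⟨c', hc', N, hN⟩ := hz
  obtain ⟨c, rfl⟩ := hf c'
  refine fun hle => ne_zero_of_mem_primeComplement hc' (hle ?_)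
  refine Filter.eventually_atTop.2 ⟨N, fun e he => ?_⟩
  rw [← Ideal.comap_map_of_surjective' f hf, Ideal.mem_comap, map_mul, map_pow]
  exact Ideal.frobeniusPower_map_le f I e (hN e he)

end MinimalPrimes

section Localization

variable {p : ℕ} [Fact p.Prime]

theorem exists_mul_mem_tightClosure_of_algebraMap_mem {A : Type*} [CommRing A] [CharP A p]
    (hA : TightClosureCommutesWithLocalization p A) {J : Ideal A} {V : Submonoid A} {x : A}
    (hx : algebraMap A (Localization V) x
      ∈ tightClosure p (J.map (algebraMap A (Localization V)))) :
    ∃ v ∈ V, v * x ∈ tightClosure p J := by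
  rw [← hA J V, SetLike.mem_coe, ← IsLocalization.mk'_one (M := V),
    IsLocalization.mk'_mem_map_algebraMap_iff] at hx
  obtain ⟨v, hv, hvx⟩ := hx
  exact ⟨v, hv, span_tightClosure_le J hvx⟩

theorem algebraMap_mem_tightClosure_map_localization {R : Type*} [CommRing R] [CharP R p]
    [IsNoetherianRing R] {I : Ideal R} {U : Submonoid R} {z : R}
    (hz : ∀ P ∈ minimalPrimes R, Disjoint (U : Set R) (P : Set R) →
      algebraMap (R ⧸ P) (Localization (U.map (Ideal.Quotient.mk P))) (Ideal.Quotient.mk P z)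
        ∈ tightClosure p
            (Ideal.map (algebraMap (R ⧸ P) (Localization (U.map (Ideal.Quotient.mk P))))
              (I.map (Ideal.Quotient.mk P)))) :
    algebraMap R (Localization U) z
      ∈ tightClosure p (Ideal.map (algebraMap R (Localization U)) I) := by
  set S := Localization U
  rcases subsingleton_or_nontrivial S with hS | hS
  · exact Subsingleton.elim (0 : S) (algebraMap R S z) ▸ zero_mem_tightClosure _
  have : CharP S p := charP_of_ringHom_of_nontrivial (algebraMap R S)
  have : IsNoetherianRing S := IsLocalization.isNoetherianRing U S ‹_›
  refine mem_tightClosure_of_forall_minimalPrimes fun Q hQ => ?_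
  set P := Q.under R
  have hP : P ∈ minimalPrimes R := by
    have := IsLocalization.minimalPrimes_map U S (⊥ : Ideal R)
    rw [Ideal.map_bot] at this
    exact this.subset hQ
  have hPU : Disjoint (U : Set R) P :=
    ((IsLocalization.isPrime_iff_isPrime_disjoint U S Q).1 hQ.isPrime).2
  set T := Localization (U.map (Ideal.Quotient.mk P))
  set g : S →+* T := IsLocalization.map T (Ideal.Quotient.mk P) U.le_comap_map
  have hker : RingHom.ker g = Q := by
    rw [IsLocalization.ker_map T _ rfl, Ideal.mk_ker, IsLocalization.map_under U S Q]
  have hgf : g.comp (algebraMap R S) = (algebraMap (R ⧸ P) T).comp (Ideal.Quotient.mk P) :=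
    IsLocalization.map_comp _
  have : Nontrivial T := nontrivial_of_ne (g 1) 0 fun h => hQ.isPrime.ne_top
    ((Ideal.eq_top_iff_one Q).2 (hker ▸ h))
  have : CharP T p := charP_of_ringHom_of_nontrivial g
  rw [← hker]
  refine not_frobeniusColon_ker_le_ker
    (IsLocalization.map_surjective_of_surjective U S T Ideal.Quotient.mk_surjective) ?_
  rw [Ideal.map_map, ← RingHom.comp_apply g, hgf, ← Ideal.map_map]
  exact hz P hP hPU

end Localization

/-- If, for every minimal prime `P` of `R` disjoint from the multiplicative set `U`,
the image of `z/1` in `(R/P)[U⁻¹]` lies in the tight closure of `I·(R/P)[U⁻¹]`, then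
`z/1` lies in the tight closure of `I·R[U⁻¹]`; equivalently, if tight closure commutes
with localization in each `R/P`, there is a single `u ∈ U` with `u·z ∈ (I·(R/P))*`
for every minimal prime `P` of `R` disjoint from `U`. -/
theorem mem_tightClosure_localization_of_quotients
    (p : ℕ) [Fact p.Prime] (R : Type) [CommRing R] [IsNoetherianRing R] [CharP R p]
    (I : Ideal R) (U : Submonoid R) (z : R)
    (hz : ∀ P ∈ minimalPrimes R, Disjoint (U : Set R) (P : Set R) →
      algebraMap (R ⧸ P) (Localization (U.map (Ideal.Quotient.mk P)))
          (Ideal.Quotient.mk P z)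
        ∈ tightClosure p
            (Ideal.map (algebraMap (R ⧸ P) (Localization (U.map (Ideal.Quotient.mk P))))
              (I.map (Ideal.Quotient.mk P)))) :
    algebraMap R (Localization U) z
        ∈ tightClosure p (Ideal.map (algebraMap R (Localization U)) I) ∧
      ((∀ P ∈ minimalPrimes R, TightClosureCommutesWithLocalization p (R ⧸ P)) →
        ∃ u ∈ U, ∀ P ∈ minimalPrimes R, Disjoint (U : Set R) (P : Set R) →
          Ideal.Quotient.mk P (u * z) ∈ tightClosure p (I.map (Ideal.Quotient.mk P))) := by
  refine ⟨algebraMap_mem_tightClosure_map_localization hz, fun hcomm => ?_⟩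
  have hfin := (minimalPrimes.finite_of_isNoetherianRing R).subset
    (Set.sep_subset _ fun P : Ideal R => Disjoint (U : Set R) (P : Set R))
  obtain ⟨u, hu, huz⟩ := U.exists_mem_forall_of_forall_exists_mem hfin
    (A := fun P u => Ideal.Quotient.mk P (u * z) ∈ tightClosure p (I.map (Ideal.Quotient.mk P)))
    (fun P _ u v h => by rw [mul_assoc, map_mul]; exact mul_mem_tightClosure _ h)
    (fun P ⟨hP, hPU⟩ => by
      have := hP.isPrime
      have : CharP (R ⧸ P) p := charP_of_ringHom_of_nontrivial (Ideal.Quotient.mk P)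
      obtain ⟨_, ⟨u, hu, rfl⟩, huz⟩ :=
        exists_mul_mem_tightClosure_of_algebraMap_mem (hcomm P hP) (hz P hP hPU)
      exact ⟨u, hu, by rwa [map_mul]⟩)
  exact ⟨u, hu, fun P hP hPU => huz P ⟨hP, hPU⟩⟩
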